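/- arXiv:1711.00573 — 4 statements merged into one kernel-verified Lean document; each statement's English description precedes it below -/
import Mathlib

section
/- Let a ∈ ℝ and let D ≥ 1 be an integer. For every F ∈ 𝒫^D[a,∞), the D-th order right derivative of F tends to zero at infinity: lim_{x→∞} F_+^{(D)}(x) = 0. -/
open MeasureTheory Filter Set Topology

/-- The iterated (right) derivative: `rderiv F j` is the `j`-th order right derivative of `F`,
where the right derivative at `x` is the derivative within `Set.Ici x` at `x`. -/
noncomputable def rderiv (F : ℝ → ℝ) : ℕ → ℝ → ℝ
  | 0 => F
  | j + 1 => fun x => derivWithin (rderiv F j) (Set.Ici x) x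

/-- A probability distribution function on `ℝ`: nondecreasing, right-continuous,
with limit `0` at `-∞` and `1` at `+∞`. -/
structure IsCDF (F : ℝ → ℝ) : Prop where
  mono : Monotone F
  right_cont : ∀ x : ℝ, ContinuousWithinAt F (Set.Ici x) x
  tendsto_atBot : Filter.Tendsto F Filter.atBot (nhds 0)
  tendsto_atTop : Filter.Tendsto F Filter.atTop (nhds 1)

/-- Membership in `𝒫^D[a,∞)`: a probability distribution function that is `D-1` times
differentiable on `[a,∞)` (two-sided derivatives at interior points, right derivatives at the
boundary), whose `D`-th order right derivative exists (and is finite) on `[a,∞)`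
and is monotone there. -/
def MemPD (D : ℕ) (a : ℝ) (F : ℝ → ℝ) : Prop :=
  IsCDF F ∧
  (∀ j < D, ∀ x ∈ Set.Ici a, HasDerivWithinAt (rderiv F j) (rderiv F (j + 1) x) (Set.Ici x) x) ∧
  (∀ j : ℕ, j + 1 < D → ∀ x ∈ Set.Ioi a, HasDerivAt (rderiv F j) (rderiv F (j + 1) x) x) ∧
  (MonotoneOn (rderiv F D) (Set.Ici a) ∨ AntitoneOn (rderiv F D) (Set.Ici a))

/-!
If the monotone function `F^{(D)}` did not tend to `0`, it would eventually stay above some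
`c > 0` or below `-c`. Integrating up then forces `F^{(D-1)}, …, F` to tend to `±∞`, contradicting
`F → 1`. Only the top step is delicate, as `F^{(D)}` is merely a right derivative of `F^{(D-1)}`:
there we use that `F^{(D-1)}` cannot jump down from the left (it is monotone if `D = 1` and a
derivative, hence Darboux, if `D ≥ 2`), which lets a rising-sun argument go through.
-/

lemma MonotoneOn.tendsto_zero_or_eventually_away {m : ℝ → ℝ} {a : ℝ}
    (hm : MonotoneOn m (Ici a)) :
    Tendsto m atTop (𝓝 0) ∨ ∃ c > 0, (∀ᶠ t in atTop, c ≤ m t) ∨ ∀ᶠ t in atTop, m t ≤ -c := by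
  set g := fun x => m (max a x)
  have hg : Monotone g := fun x y hxy =>
    hm (mem_Ici.2 (le_max_left _ _)) (mem_Ici.2 (le_max_left _ _)) (max_le_max_left a hxy)
  have hgm : g =ᶠ[atTop] m := (eventually_ge_atTop a).mono fun x hx => by simp [g, hx]
  rcases tendsto_atTop_of_monotone hg with h | ⟨l, hl⟩
  · refine Or.inr ⟨1, one_pos, Or.inl ?_⟩
    filter_upwards [h.eventually_ge_atTop 1, hgm] with t h1 ht
    rwa [← ht]
  · rcases lt_trichotomy l 0 with hl0 | rfl | hl0
    · refine Or.inr ⟨-l, neg_pos.2 hl0, Or.inr ?_⟩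
      filter_upwards [hgm] with t ht
      rw [neg_neg, ← ht]
      exact hg.ge_of_tendsto hl t
    · exact Or.inl (hl.congr' hgm)
    · refine Or.inr ⟨l / 2, half_pos hl0, Or.inl ?_⟩
      filter_upwards [hgm, hl.eventually (eventually_ge_nhds (half_lt_self hl0))] with t ht h
      rwa [← ht]

lemma tendsto_zero_or_eventually_away {m : ℝ → ℝ} {a : ℝ}
    (hm : MonotoneOn m (Ici a) ∨ AntitoneOn m (Ici a)) :
    Tendsto m atTop (𝓝 0) ∨ ∃ c > 0, (∀ᶠ t in atTop, c ≤ m t) ∨ ∀ᶠ t in atTop, m t ≤ -c := by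
  rcases hm with hm | hm
  · exact hm.tendsto_zero_or_eventually_away
  rcases hm.neg.tendsto_zero_or_eventually_away with h | ⟨c, hc, h | h⟩
  · exact Or.inl (by simpa using h.neg)
  · exact Or.inr ⟨c, hc, Or.inr (h.mono fun t ht => by linarith)⟩
  · exact Or.inr ⟨c, hc, Or.inl (h.mono fun t ht => by linarith)⟩

lemma HasDerivWithinAt.eventually_nhdsGT_lt {f : ℝ → ℝ} {f' x : ℝ}
    (hf : HasDerivWithinAt f f' (Ici x) x) (hf' : 0 < f') : ∀ᶠ y in 𝓝[>] x, f x < f y := by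
  have hslope := (hasDerivWithinAt_iff_tendsto_slope' (lt_irrefl x)).1 hf.Ioi_of_Ici
  filter_upwards [hslope.eventually (eventually_gt_nhds hf'), self_mem_nhdsWithin] with y hy hxy
  exact (slope_pos_iff hxy).1 hy

/-- Rising sun: by `hleft` the supremum of the points up to which `φ ≥ φ y` still has this
property, and it cannot lie before `w`, since a positive right derivative pushes `φ` up just to
its right. -/
lemma monotoneOn_Ici_of_hasDerivWithinAt_Ici_pos {φ φ' : ℝ → ℝ} {x₀ : ℝ}
    (hleft : ∀ z ∈ Ici x₀, ∀ v, (∀ᶠ t in 𝓝[<] z, v ≤ φ t) → v ≤ φ z)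
    (hφ : ∀ t ∈ Ici x₀, HasDerivWithinAt φ (φ' t) (Ici t) t) (hpos : ∀ t ∈ Ici x₀, 0 < φ' t) :
    MonotoneOn φ (Ici x₀) := by
  intro y hy w hw hyw
  set A := {t ∈ Icc y w | ∀ u ∈ Icc y t, φ y ≤ φ u}
  have hyA : y ∈ A := ⟨left_mem_Icc.2 hyw, fun u hu => by rw [le_antisymm hu.2 hu.1]⟩
  have hbdd : BddAbove A := ⟨w, fun t ht => ht.1.2⟩
  set z := sSup A
  have hyz : y ≤ z := le_csSup hbdd hyA
  have hzw : z ≤ w := csSup_le ⟨y, hyA⟩ fun t ht => ht.1.2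
  have hbelow : ∀ u ∈ Ico y z, φ y ≤ φ u := fun u hu => by
    obtain ⟨t, htA, hut⟩ := exists_lt_of_lt_csSup ⟨y, hyA⟩ hu.2
    exact htA.2 u ⟨hu.1, hut.le⟩
  have hz : φ y ≤ φ z := by
    rcases hyz.eq_or_lt with h | h
    · rw [h]
    · exact hleft z (mem_Ici.2 (le_trans hy hyz)) _ (mem_of_superset (Ico_mem_nhdsLT h) hbelow)
  have hupto : ∀ u ∈ Icc y z, φ y ≤ φ u := fun u hu =>
    hu.2.eq_or_lt.elim (fun h => h ▸ hz) fun h => hbelow u ⟨hu.1, h⟩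
  rcases hzw.eq_or_lt with h | hzw
  · exact h ▸ hz
  obtain ⟨b, hb, hright⟩ := mem_nhdsGT_iff_exists_Ioc_subset.1
    ((hφ z (mem_Ici.2 (le_trans hy hyz))).eventually_nhdsGT_lt (hpos z (le_trans hy hyz)))
  have hmin : min b w ∈ A := by
    refine ⟨⟨hyz.trans (lt_min hb hzw).le, min_le_right _ _⟩, fun u hu => ?_⟩
    rcases le_or_gt u z with huz | hzu
    · exact hupto u ⟨hu.1, huz⟩
    · exact hz.trans (hright ⟨hzu, hu.2.trans (min_le_left _ _)⟩).le
  exact absurd (le_csSup hbdd hmin) (lt_min hb hzw).not_ge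

lemma tendsto_atTop_of_hasDerivWithinAt_Ici {g g' : ℝ → ℝ} {c : ℝ} (hc : 0 < c)
    (hleft : ∀ᶠ z in atTop, ∀ v, (∀ᶠ t in 𝓝[<] z, v ≤ g t - c / 2 * t) → v ≤ g z - c / 2 * z)
    (hg : ∀ᶠ t in atTop, HasDerivWithinAt g (g' t) (Ici t) t)
    (hg' : ∀ᶠ t in atTop, c ≤ g' t) :
    Tendsto g atTop atTop := by
  obtain ⟨x₀, hx₀⟩ := eventually_atTop.1 (hleft.and (hg.and hg'))
  have hmono : MonotoneOn (fun t => g t - c / 2 * t) (Ici x₀) := by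
    refine monotoneOn_Ici_of_hasDerivWithinAt_Ici_pos (φ' := fun t => g' t - c / 2)
      (fun z hz => (hx₀ z hz).1) (fun t ht => ?_) fun t ht => ?_
    · have hlin : HasDerivWithinAt (fun s => c / 2 * s) (c / 2) (Ici t) t := by
        simpa using ((hasDerivAt_id' t).const_mul (c / 2)).hasDerivWithinAt
      exact (hx₀ t ht).2.1.fun_sub hlin
    · linarith [(hx₀ t ht).2.2]
  refine tendsto_atTop_mono' _ ((eventually_ge_atTop x₀).mono fun t ht => ?_)
    (tendsto_atTop_add_const_left _ (g x₀ - c / 2 * x₀)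
      (tendsto_id.const_mul_atTop (half_pos hc)))
  have := hmono self_mem_Ici ht ht
  simp only [id] at this ⊢
  linarith

lemma Monotone.le_sub_mul_of_eventually_nhdsLT {g : ℝ → ℝ} (hg : Monotone g) {k v z : ℝ}
    (h : ∀ᶠ t in 𝓝[<] z, v ≤ g t - k * t) : v ≤ g z - k * z := by
  have hlim : Tendsto (fun t => g z - k * t) (𝓝[<] z) (𝓝 (g z - k * z)) :=
    ((continuous_const.sub (continuous_const.mul continuous_id)).tendsto z).mono_left
      nhdsWithin_le_nhds
  refine _root_.ge_of_tendsto hlim ?_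
  filter_upwards [h, self_mem_nhdsWithin] with t ht htz
  linarith [hg (le_of_lt htz)]

/-- By Darboux's theorem a derivative cannot jump down from the left. -/
lemma le_of_eventually_nhdsLT_of_hasDerivAt {Φ φ : ℝ → ℝ} {x₀ z v : ℝ}
    (hΦ : ∀ t ∈ Ioi x₀, HasDerivAt Φ (φ t) t) (hz : x₀ < z) (h : ∀ᶠ t in 𝓝[<] z, v ≤ φ t) :
    v ≤ φ z := by
  by_contra! hlt
  obtain ⟨y, hyz, hsub⟩ := mem_nhdsLT_iff_exists_Ico_subset.1 (h.and (Ioo_mem_nhdsLT hz))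
  have hy : v ≤ φ y ∧ x₀ < y := (hsub ⟨le_rfl, hyz⟩).imp id fun h => h.1
  have hdarboux := (ordConnected_Icc (a := y) (b := z)).image_hasDerivWithinAt
    fun t ht => (hΦ t (hy.2.trans_le ht.1)).hasDerivWithinAt
  obtain ⟨t, ht, hφt⟩ := hdarboux.out (mem_image_of_mem φ (right_mem_Icc.2 hyz.le))
    (mem_image_of_mem φ (left_mem_Icc.2 hyz.le))
    (⟨by linarith, by linarith⟩ : (φ z + v) / 2 ∈ Icc (φ z) (φ y))
  have htz : t < z := ht.2.lt_of_ne fun h => by rw [h] at hφt; linarith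
  linarith [(hsub ⟨ht.1, htz⟩).1]

lemma Monotone.tendsto_atTop_of_hasDerivWithinAt_Ici {g g' : ℝ → ℝ} {c : ℝ} (hmono : Monotone g)
    (hc : 0 < c) (hg : ∀ᶠ t in atTop, HasDerivWithinAt g (g' t) (Ici t) t)
    (hg' : ∀ᶠ t in atTop, c ≤ g' t) :
    Tendsto g atTop atTop :=
  _root_.tendsto_atTop_of_hasDerivWithinAt_Ici hc
    (Eventually.of_forall fun _ _ => hmono.le_sub_mul_of_eventually_nhdsLT) hg hg'

lemma tendsto_atTop_of_hasDerivWithinAt_Ici_of_hasDerivAt {P g g' : ℝ → ℝ} {c : ℝ} (hc : 0 < c)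
    (hP : ∀ᶠ t in atTop, HasDerivAt P (g t) t)
    (hg : ∀ᶠ t in atTop, HasDerivWithinAt g (g' t) (Ici t) t)
    (hg' : ∀ᶠ t in atTop, c ≤ g' t) :
    Tendsto g atTop atTop := by
  obtain ⟨x₀, hx₀⟩ := eventually_atTop.1 hP
  refine tendsto_atTop_of_hasDerivWithinAt_Ici hc ?_ hg hg'
  filter_upwards [eventually_gt_atTop x₀] with z hz v h
  refine le_of_eventually_nhdsLT_of_hasDerivAt (Φ := fun t => P t - c / 4 * t ^ 2)
    (φ := fun t => g t - c / 2 * t) (fun t ht => ?_) hz h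
  refine ((hx₀ t (le_of_lt ht)).fun_sub ((hasDerivAt_pow 2 t).const_mul (c / 4))).congr_deriv ?_
  norm_num
  ring

lemma tendsto_atTop_of_hasDerivAt_of_tendsto_atTop {p q : ℝ → ℝ}
    (hp : ∀ᶠ t in atTop, HasDerivAt p (q t) t) (hq : Tendsto q atTop atTop) :
    Tendsto p atTop atTop := by
  obtain ⟨x₀, hx₀⟩ := eventually_atTop.1 (hp.and (hq.eventually_ge_atTop 1))
  have hgrowth := (convex_Ici x₀).mul_sub_le_image_sub_of_le_deriv (f := p) (C := 1)
    (fun t ht => (hx₀ t ht).1.continuousAt.continuousWithinAt)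
    (fun t ht => (hx₀ t (interior_subset ht)).1.differentiableAt.differentiableWithinAt)
    (fun t ht => (hx₀ t (interior_subset ht)).1.deriv ▸ (hx₀ t (interior_subset ht)).2)
    x₀ self_mem_Ici
  refine tendsto_atTop_mono' _ ((eventually_ge_atTop x₀).mono fun t ht => ?_)
    (tendsto_atTop_add_const_left _ (p x₀ - x₀) tendsto_id)
  simp only [id]
  linarith [hgrowth t ht ht]

lemma tendsto_atTop_of_hasDerivAt_succ {f : ℕ → ℝ → ℝ} {n : ℕ}
    (hf : ∀ j < n, ∀ᶠ t in atTop, HasDerivAt (f j) (f (j + 1) t) t)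
    (hn : Tendsto (f n) atTop atTop) : Tendsto (f 0) atTop atTop :=
  Nat.decreasingInduction (motive := fun j _ => Tendsto (f j) atTop atTop)
    (fun j hj ih => tendsto_atTop_of_hasDerivAt_of_tendsto_atTop (hf j hj) ih) hn (Nat.zero_le n)

lemma rderiv_neg (F : ℝ → ℝ) (j : ℕ) : rderiv (-F) j = -rderiv F j := by
  induction j with
  | zero => rfl
  | succ j ih =>
    funext x
    change derivWithin (rderiv (-F) j) (Ici x) x = -derivWithin (rderiv F j) (Ici x) x
    rw [ih, derivWithin.neg]

lemma tendsto_atTop_of_eventually_le_rderiv {F : ℝ → ℝ} {k : ℕ} {c : ℝ} (hc : 0 < c)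
    (hder : ∀ j < k + 1, ∀ᶠ t in atTop, HasDerivAt (rderiv F j) (rderiv F (j + 1) t) t)
    (htop : ∀ᶠ t in atTop,
      HasDerivWithinAt (rderiv F (k + 1)) (rderiv F (k + 2) t) (Ici t) t)
    (hge : ∀ᶠ t in atTop, c ≤ rderiv F (k + 2) t) :
    Tendsto F atTop atTop :=
  tendsto_atTop_of_hasDerivAt_succ hder
    (tendsto_atTop_of_hasDerivWithinAt_Ici_of_hasDerivAt hc (hder k k.lt_succ_self) htop hge)

lemma tendsto_atBot_of_eventually_rderiv_le {F : ℝ → ℝ} {k : ℕ} {c : ℝ} (hc : 0 < c)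
    (hder : ∀ j < k + 1, ∀ᶠ t in atTop, HasDerivAt (rderiv F j) (rderiv F (j + 1) t) t)
    (htop : ∀ᶠ t in atTop,
      HasDerivWithinAt (rderiv F (k + 1)) (rderiv F (k + 2) t) (Ici t) t)
    (hle : ∀ᶠ t in atTop, rderiv F (k + 2) t ≤ -c) :
    Tendsto F atTop atBot := by
  rw [← tendsto_neg_atTop_iff]
  refine tendsto_atTop_of_eventually_le_rderiv (F := -F) (k := k) hc (fun j hj => ?_) ?_ ?_
  · simpa only [rderiv_neg, Pi.neg_apply] using (hder j hj).mono fun t ht => ht.neg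
  · simpa only [rderiv_neg, Pi.neg_apply] using htop.mono fun t ht => ht.neg
  · simpa only [rderiv_neg, Pi.neg_apply, le_neg] using hle

/-- For `D ≥ 1` and `F ∈ 𝒫^D[a,∞)`, the `D`-th order right derivative of `F`
tends to `0` at `+∞`. -/
theorem stmt_0 (D : ℕ) (hD : 1 ≤ D) (a : ℝ) (F : ℝ → ℝ) (hF : MemPD D a F) :
    Filter.Tendsto (rderiv F D) Filter.atTop (nhds 0) := by
  obtain ⟨hcdf, hright, htwo, hmono⟩ := hF
  have hF_top := not_tendsto_atTop_of_tendsto_nhds hcdf.tendsto_atTop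
  have hF_bot := not_tendsto_atBot_of_tendsto_nhds hcdf.tendsto_atTop
  have hright' : ∀ j < D, ∀ᶠ t in atTop,
      HasDerivWithinAt (rderiv F j) (rderiv F (j + 1) t) (Ici t) t :=
    fun j hj => (eventually_ge_atTop a).mono (hright j hj)
  obtain _ | _ | k := D
  · omega
  · rcases tendsto_zero_or_eventually_away hmono with h0 | ⟨c, hc, hge | hle⟩
    · exact h0
    · exact absurd (hcdf.mono.tendsto_atTop_of_hasDerivWithinAt_Ici hc (hright' 0 one_pos) hge)
        hF_top
    · obtain ⟨t, ht⟩ := hle.exists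
      have : 0 ≤ rderiv F 1 t := (hcdf.mono.monotoneOn (Ici t)).derivWithin_nonneg
      linarith
  · have hder : ∀ j < k + 1, ∀ᶠ t in atTop, HasDerivAt (rderiv F j) (rderiv F (j + 1) t) t :=
      fun j hj => (eventually_gt_atTop a).mono (htwo j (by omega))
    have htop := hright' (k + 1) (by omega)
    rcases tendsto_zero_or_eventually_away hmono with h0 | ⟨c, hc, hge | hle⟩
    · exact h0
    · exact absurd (tendsto_atTop_of_eventually_le_rderiv hc hder htop hge) hF_top
    · exact absurd (tendsto_atBot_of_eventually_rderiv_le hc hder htop hle) hF_bot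
end

section
/- Let a ∈ ℝ and let D ≥ 1 be an integer. Then 𝒫^D[a,∞) ⊆ 𝒫^{D−1}[a,∞); that is, if F ∈ 𝒫^D[a,∞), then F is D−2 times differentiable with finite monotone (D−1)-th right derivative on [a,∞) (for D = 1, this says F itself is monotone, i.e. F ∈ 𝒫^0[a,∞)). Consequently 𝒫^D[a,∞) ⊆ 𝒫^{D−1}[a,∞) ⊆ … ⊆ 𝒫^0[a,∞). -/
open MeasureTheory Filter Set Topology

/-! Only the step from `D = k + 2` to `k + 1` needs an argument: the monotone function
`F^{(k+2)}` must have constant sign on `[a, ∞)`, for then `F^{(k+1)}` is monotone. Were it, say,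
nondecreasing and positive somewhere, it would stay above some `c > 0`, so `F^{(k+1)}` would grow
at least linearly and, going down the chain of derivatives, `F` would tend to `+∞`, contradicting
`F → 1`.

The subtle point is that `F^{(k+1)}` is only a derivative with a right derivative, not known to be
continuous. Such a `g = f'` with `g'₊ > 0` is still monotone, because `f` is convex: at an interior
maximum of `f` minus a chord, `g` would equal the slope of the chord while increasing to the right.
The case `g'₊ ≥ 0` follows by adding `ε t` to `g`. -/

theorem not_isLocalMax_of_hasDerivWithinAt_Ici_pos {w W : ℝ → ℝ} {s ψ : ℝ}
    (hw : ∀ᶠ t in 𝓝 s, HasDerivAt w (W t) t) (hW : HasDerivWithinAt W ψ (Ici s) s)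
    (hψ : 0 < ψ) : ¬IsLocalMax w s := by
  intro hmax
  have hWs : W s = 0 := hmax.hasDerivAt_eq_zero hw.self_of_nhds
  have hW_pos : ∀ᶠ t in 𝓝[>] s, 0 < W t := by
    have hslope := hasDerivWithinAt_iff_tendsto_slope.mp hW
    rw [Ici_sdiff_left] at hslope
    filter_upwards [hslope.eventually (eventually_gt_nhds hψ), self_mem_nhdsWithin]
      with t ht hst
    rw [slope_def_field, hWs, sub_zero] at ht
    exact (div_pos_iff_of_pos_right (sub_pos.2 hst)).1 ht
  obtain ⟨u, hsu, hu⟩ :=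
    mem_nhdsGT_iff_exists_Ioo_subset.mp (hW_pos.and (nhdsWithin_le_nhds (hw.and hmax)))
  obtain ⟨t, hst, htu⟩ := exists_between (mem_Ioi.1 hsu)
  have hderiv : ∀ τ ∈ Ioo s t, HasDerivAt w (W τ) τ := fun τ hτ =>
    (hu ⟨hτ.1, hτ.2.trans htu⟩).2.1
  have hcont : ContinuousOn w (Icc s t) := by
    intro τ hτ
    rcases hτ.1.eq_or_lt with rfl | hsτ
    · exact hw.self_of_nhds.continuousAt.continuousWithinAt
    · exact (hu ⟨hsτ, hτ.2.trans_lt htu⟩).2.1.continuousAt.continuousWithinAt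
  obtain ⟨c, hc, hWc⟩ := exists_hasDerivAt_eq_slope w W hst hcont hderiv
  have hslope_pos : 0 < (w t - w s) / (t - s) := hWc ▸ (hu ⟨hc.1, hc.2.trans htu⟩).1
  have hwt : w t ≤ w s := (hu ⟨hst, htu⟩).2.2
  have := (div_pos_iff_of_pos_right (sub_pos.2 hst)).1 hslope_pos
  linarith

section RightDerivOfDeriv

variable {f g φ : ℝ → ℝ} {b : ℝ}

theorem convexOn_Ici_of_rightDeriv_pos
    (hf : ∀ x ∈ Ici b, HasDerivWithinAt f (g x) (Ici b) x)
    (hg : ∀ x ∈ Ioi b, HasDerivWithinAt g (φ x) (Ici x) x) (hφ : ∀ x ∈ Ioi b, 0 < φ x) :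
    ConvexOn ℝ (Ici b) f := by
  refine convexOn_of_slope_mono_adjacent (convex_Ici b) fun {x y z} hx _ hxy hyz => ?_
  have hxz : x < z := hxy.trans hyz
  set S := (f z - f x) / (z - x)
  have hSzx : S * (z - x) = f z - f x := div_mul_cancel₀ _ (sub_pos.2 hxz).ne'
  set w : ℝ → ℝ := fun t => f t - t * S - (f x - x * S) with hw
  have hwx : w x = 0 := by simp only [hw]; ring
  have hwz : w z = 0 := by simp only [hw]; linarith
  have hwcont : ContinuousOn w (Icc x z) := fun t ht =>
    (((hf t (le_trans hx ht.1)).continuousWithinAt.mono fun τ hτ => le_trans hx hτ.1).sub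
      (continuousWithinAt_id.mul continuousWithinAt_const)).sub continuousWithinAt_const
  obtain ⟨s, hs, hmax⟩ := isCompact_Icc.exists_isMaxOn (nonempty_Icc.2 hxz.le) hwcont
  have hwy : w y ≤ 0 := by
    refine (hmax ⟨hxy.le, hyz.le⟩).trans (not_lt.1 fun hpos => ?_)
    have hxs : x < s := hs.1.lt_of_ne (by rintro rfl; linarith)
    have hsz : s < z := hs.2.lt_of_ne (by rintro rfl; linarith)
    have hbs : b < s := lt_of_le_of_lt hx hxs
    refine not_isLocalMax_of_hasDerivWithinAt_Ici_pos (W := fun t => g t - S) ?_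
      ((hg s hbs).sub_const S) (hφ s hbs) (hmax.isLocalMax (Icc_mem_nhds hxs hsz))
    filter_upwards [Ioi_mem_nhds hbs] with t ht
    have hft := (hf t (mem_Ioi.1 ht).le).hasDerivAt (Ici_mem_nhds ht)
    exact (hft.sub (hasDerivAt_mul_const S)).sub_const _
  simp only [hw] at hwy
  rw [div_le_div_iff₀ (sub_pos.2 hxy) (sub_pos.2 hyz)]
  nlinarith [mul_le_mul_of_nonneg_left hwy (sub_pos.2 hxz).le]

theorem monotoneOn_Ici_of_rightDeriv_pos
    (hf : ∀ x ∈ Ici b, HasDerivWithinAt f (g x) (Ici b) x)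
    (hg : ∀ x ∈ Ioi b, HasDerivWithinAt g (φ x) (Ici x) x) (hφ : ∀ x ∈ Ioi b, 0 < φ x) :
    MonotoneOn g (Ici b) := by
  have hconv := convexOn_Ici_of_rightDeriv_pos hf hg hφ
  intro x hx y hy hxy
  rcases hxy.eq_or_lt with rfl | hxy
  · rfl
  calc g x ≤ slope f x y :=
        hconv.le_slope_of_hasDerivWithinAt_Ioi hx hy hxy ((hf x hx).mono (Ioi_subset_Ici hx))
    _ ≤ g y := hconv.slope_le_of_hasDerivAt hx hy hxy
        ((hf y hy).hasDerivAt (Ici_mem_nhds (lt_of_le_of_lt hx hxy)))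

theorem hasDerivAt_mul_sq_div_two (c x : ℝ) : HasDerivAt (fun t => c * t ^ 2 / 2) (c * x) x := by
  refine (((hasDerivAt_pow 2 x).const_mul c).div_const 2).congr_deriv ?_
  push_cast
  ring

theorem monotoneOn_Ici_of_rightDeriv_nonneg
    (hf : ∀ x ∈ Ici b, HasDerivWithinAt f (g x) (Ici b) x)
    (hg : ∀ x ∈ Ioi b, HasDerivWithinAt g (φ x) (Ici x) x) (hφ : ∀ x ∈ Ioi b, 0 ≤ φ x) :
    MonotoneOn g (Ici b) := by
  have hpert : ∀ ε > 0, MonotoneOn (fun x => g x + ε * x) (Ici b) := fun ε hε =>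
    monotoneOn_Ici_of_rightDeriv_pos (f := fun x => f x + ε * x ^ 2 / 2) (φ := fun x => φ x + ε)
      (fun x hx => (hf x hx).add (hasDerivAt_mul_sq_div_two ε x).hasDerivWithinAt)
      (fun x hx => (hg x hx).add ((hasDerivAt_id x).const_mul ε |>.hasDerivWithinAt
        |>.congr_deriv (mul_one ε)))
      (fun x hx => add_pos_of_nonneg_of_pos (hφ x hx) hε)
  intro x hx y hy hxy
  by_contra! hlt
  have hyx : 0 < y - x := sub_pos.2 (hxy.lt_of_ne (by rintro rfl; exact hlt.false))
  set ε := (g x - g y) / (2 * (y - x)) with hε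
  have hεpos : 0 < ε := div_pos (by linarith) (by positivity)
  have hεyx : ε * (y - x) = (g x - g y) / 2 := by rw [hε]; field_simp
  have := hpert ε hεpos hx hy hxy
  simp only at this
  nlinarith

theorem tendsto_atTop_of_rightDeriv_ge {c : ℝ} (hc : 0 < c)
    (hf : ∀ x ∈ Ici b, HasDerivWithinAt f (g x) (Ici b) x)
    (hg : ∀ x ∈ Ioi b, HasDerivWithinAt g (φ x) (Ici x) x) (hφ : ∀ x ∈ Ioi b, c ≤ φ x) :
    Tendsto g atTop atTop := by
  have hmono : MonotoneOn (fun x => g x - c * x) (Ici b) :=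
    monotoneOn_Ici_of_rightDeriv_nonneg (f := fun x => f x - c * x ^ 2 / 2)
      (φ := fun x => φ x - c)
      (fun x hx => (hf x hx).sub (hasDerivAt_mul_sq_div_two c x).hasDerivWithinAt)
      (fun x hx => (hg x hx).sub ((hasDerivAt_id x).const_mul c |>.hasDerivWithinAt
        |>.congr_deriv (mul_one c)))
      (fun x hx => sub_nonneg.2 (hφ x hx))
  have hbound : ∀ᶠ x in atTop, g b - c * b ≤ g x - c * x :=
    eventually_atTop.2 ⟨b, fun x hx => hmono self_mem_Ici hx hx⟩
  simpa using tendsto_atTop_add_left_of_le' _ _ hbound (tendsto_id.const_mul_atTop hc)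

theorem antitoneOn_Ici_of_monotoneOn_rightDeriv
    (hf : ∀ x ∈ Ici b, HasDerivWithinAt f (g x) (Ici b) x)
    (hg : ∀ x ∈ Ioi b, HasDerivWithinAt g (φ x) (Ici x) x) (hφ : MonotoneOn φ (Ici b))
    (hg_top : ¬Tendsto g atTop atTop) : AntitoneOn g (Ici b) := by
  have hφ_nonpos : ∀ x ∈ Ioi b, φ x ≤ 0 := by
    intro x₀ (hx₀ : b < x₀)
    by_contra! hpos
    refine hg_top (tendsto_atTop_of_rightDeriv_ge hpos (b := x₀)
      (fun x hx => (hf x (hx₀.le.trans hx)).mono (Ici_subset_Ici.2 hx₀.le))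
      (fun x hx => hg x (hx₀.trans hx)) fun x hx => ?_)
    exact hφ (mem_Ici.2 hx₀.le) (mem_Ici.2 (hx₀.le.trans hx.le)) hx.le
  have := monotoneOn_Ici_of_rightDeriv_nonneg (f := fun x => -f x) (g := fun x => -g x)
    (φ := fun x => -φ x) (fun x hx => (hf x hx).neg) (fun x hx => (hg x hx).neg)
    fun x hx => neg_nonneg.2 (hφ_nonpos x hx)
  exact fun x hx y hy hxy => neg_le_neg_iff.1 (this hx hy hxy)

theorem monotoneOn_or_antitoneOn_of_rightDeriv
    (hf : ∀ x ∈ Ici b, HasDerivWithinAt f (g x) (Ici b) x)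
    (hg : ∀ x ∈ Ioi b, HasDerivWithinAt g (φ x) (Ici x) x)
    (hφ : MonotoneOn φ (Ici b) ∨ AntitoneOn φ (Ici b))
    (hg_top : ¬Tendsto g atTop atTop) (hg_bot : ¬Tendsto g atTop atBot) :
    MonotoneOn g (Ici b) ∨ AntitoneOn g (Ici b) := by
  rcases hφ with hφ | hφ
  · exact Or.inr (antitoneOn_Ici_of_monotoneOn_rightDeriv hf hg hφ hg_top)
  · have := antitoneOn_Ici_of_monotoneOn_rightDeriv (f := fun x => -f x) (g := fun x => -g x)
      (φ := fun x => -φ x) (fun x hx => (hf x hx).neg) (fun x hx => (hg x hx).neg) hφ.neg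
      (by rwa [tendsto_neg_atTop_iff])
    exact Or.inl fun x hx y hy hxy => neg_le_neg_iff.1 (this hx hy hxy)

end RightDerivOfDeriv

theorem tendsto_atTop_of_hasDerivAt_of_tendsto_atTop_s1 {u v : ℝ → ℝ} {b : ℝ}
    (hu : ∀ x ∈ Ioi b, HasDerivAt u (v x) x) (hv : Tendsto v atTop atTop) :
    Tendsto u atTop atTop := by
  obtain ⟨x₀, hx₀⟩ := eventually_atTop.1 (hv.eventually_ge_atTop 1)
  set x₁ := max x₀ (b + 1)
  have hu₁ : ∀ x ∈ Ici x₁, HasDerivAt u (v x) x := fun x hx =>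
    hu x ((lt_add_one b).trans_le ((le_max_right _ _).trans hx))
  have hgrowth : ∀ y ≥ x₁, u x₁ + (y - x₁) ≤ u y := by
    intro y hy
    have := (convex_Ici x₁).mul_sub_le_image_sub_of_le_deriv (f := u) (C := 1)
      (fun x hx => (hu₁ x hx).continuousAt.continuousWithinAt)
      (fun x hx => (hu₁ x (interior_subset hx)).differentiableAt.differentiableWithinAt)
      (fun x hx => (hu₁ x (interior_subset hx)).deriv ▸
        hx₀ x ((le_max_left _ _).trans (interior_subset hx)))
      x₁ self_mem_Ici y hy hy
    linarith
  exact tendsto_atTop_mono' _ (eventually_atTop.2 ⟨x₁, hgrowth⟩)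
    (tendsto_atTop_add_const_left _ _ (tendsto_atTop_add_const_right _ _ tendsto_id))

theorem tendsto_atTop_of_iterated_hasDerivAt {f : ℕ → ℝ → ℝ} {b : ℝ} {n : ℕ}
    (hf : ∀ j < n, ∀ x ∈ Ioi b, HasDerivAt (f j) (f (j + 1) x) x)
    (hn : Tendsto (f n) atTop atTop) : Tendsto (f 0) atTop atTop := by
  induction n with
  | zero => exact hn
  | succ n ih =>
    exact ih (fun j hj => hf j (by omega))
      (tendsto_atTop_of_hasDerivAt_of_tendsto_atTop_s1 (hf n (by omega)) hn)

namespace MemPD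

variable {D : ℕ} {a : ℝ} {F : ℝ → ℝ}

theorem hasDerivWithinAt_Ici (hF : MemPD D a F) {j : ℕ} (hj : j + 1 < D) {x : ℝ}
    (hx : x ∈ Ici a) : HasDerivWithinAt (rderiv F j) (rderiv F (j + 1) x) (Ici a) x := by
  rcases (mem_Ici.1 hx).eq_or_lt with rfl | hax
  · exact hF.2.1 j (by omega) _ hx
  · exact (hF.2.2.1 j hj x hax).hasDerivWithinAt

theorem monotoneOn_or_antitoneOn_rderiv {k : ℕ} (hF : MemPD (k + 2) a F) :
    MonotoneOn (rderiv F (k + 1)) (Ici a) ∨ AntitoneOn (rderiv F (k + 1)) (Ici a) := by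
  obtain ⟨hcdf, hright, hderiv, hmono⟩ := hF
  have hchain : ∀ j < k + 1, ∀ x ∈ Ioi a, HasDerivAt (rderiv F j) (rderiv F (j + 1) x) x :=
    fun j hj => hderiv j (by omega)
  refine monotoneOn_or_antitoneOn_of_rightDeriv
    (fun x hx => hasDerivWithinAt_Ici ⟨hcdf, hright, hderiv, hmono⟩ (by omega) hx)
    (fun x hx => hright (k + 1) (by omega) x (mem_Ioi.1 hx).le) hmono ?_ ?_
  · exact fun htop => not_tendsto_atTop_of_tendsto_nhds hcdf.tendsto_atTop
      (tendsto_atTop_of_iterated_hasDerivAt hchain htop)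
  · intro hbot
    refine not_tendsto_atTop_of_tendsto_nhds hcdf.tendsto_atTop.neg
      (tendsto_atTop_of_iterated_hasDerivAt (f := fun j x => -rderiv F j x) (n := k + 1)
        (fun j hj x hx => (hchain j hj x hx).neg) ?_)
    exact tendsto_neg_atTop_iff.2 hbot

theorem pred (hF : MemPD D a F) : MemPD (D - 1) a F := by
  match D, hF with
  | 0, hF => exact hF
  | k + 1, hF =>
    refine ⟨hF.1, fun j hj => hF.2.1 j (by omega), fun j hj => hF.2.2.1 j (by omega), ?_⟩
    match k with
    | 0 => exact Or.inl (hF.1.mono.monotoneOn _)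
    | k + 1 => exact hF.monotoneOn_or_antitoneOn_rderiv

theorem of_le (hF : MemPD D a F) {k : ℕ} (hk : k ≤ D) : MemPD k a F := by
  induction D, hk using Nat.le_induction with
  | base => exact hF
  | succ n _ ih => exact ih hF.pred

end MemPD

theorem stmt_1_general (D : ℕ) (a : ℝ) (F : ℝ → ℝ) (hF : MemPD D a F) :
    MemPD (D - 1) a F ∧ ∀ k ≤ D, MemPD k a F :=
  ⟨hF.pred, fun _ hk => hF.of_le hk⟩

/-- For `D ≥ 1`, `𝒫^D[a,∞) ⊆ 𝒫^{D-1}[a,∞)`, and consequently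
`𝒫^D[a,∞) ⊆ 𝒫^k[a,∞)` for every `k ≤ D`. -/
theorem stmt_1 (D : ℕ) (hD : 1 ≤ D) (a : ℝ) (F : ℝ → ℝ) (hF : MemPD D a F) :
    MemPD (D - 1) a F ∧ ∀ k ≤ D, MemPD k a F :=
  stmt_1_general D a F hF
end

section
/- Let a < b̲ < b̄ be real numbers and 0 ≤ γ̲ ≤ γ̄ ≤ 1. Consider the supremum of μ([b̲, b̄]) over all Borel probability measures μ on ℝ such that the restriction of μ to (a,∞) has a density f with respect to Lebesgue measure which is nonnegative and nonincreasing on [a,∞), and such that γ̲ ≤ μ((a,∞)) ≤ γ̄. This supremum equals γ̄·(b̄ − b̲)/(b̄ − a), and it is attained by the measure placing mass γ̄ uniformly on [a, b̄] and mass 1 − γ̄ at any point below a. -/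
/-!
Write `m` for the value of the nonincreasing tail density at `bl`. Monotonicity gives
`μ([bl, bu]) ≤ m (bu - bl)` and `m (bl - a) ≤ μ((a, bl))`, while the two sets together carry at
most the tail mass `γu`. Eliminating `m` yields `μ([bl, bu]) (bu - a) ≤ γu (bu - bl)`, with
equality when the density is constant on `(a, bu]` and vanishes beyond `bu`.
-/

open MeasureTheory Filter Set Topology

/-- Feasibility for the monotone tail estimation problem: `μ` is a Borel probability measure
on `ℝ` whose restriction to `(a,∞)` has a density `f` with respect to Lebesgue measure that is
nonnegative and nonincreasing on `[a,∞)`, and whose tail mass `μ((a,∞))` lies in `[γl, γu]`. -/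
def Feas4 (a γl γu : ℝ) (μ : Measure ℝ) : Prop :=
  IsProbabilityMeasure μ ∧
  (∃ f : ℝ → ℝ, (∀ x ∈ Set.Ici a, 0 ≤ f x) ∧ AntitoneOn f (Set.Ici a) ∧
    μ.restrict (Set.Ioi a) =
      (volume.restrict (Set.Ioi a)).withDensity (fun x => ENNReal.ofReal (f x))) ∧
  γl ≤ (μ (Set.Ioi a)).toReal ∧ (μ (Set.Ioi a)).toReal ≤ γu

/-- The candidate optimal measure: mass `γu` spread uniformly over `[a, bu]`, plus
mass `1 - γu` at the point `c`. -/
noncomputable def OptMeas4 (a bu γu c : ℝ) : Measure ℝ :=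
  ENNReal.ofReal (γu / (bu - a)) • volume.restrict (Set.Icc a bu)
    + ENNReal.ofReal (1 - γu) • Measure.dirac c

open scoped ENNReal

lemma measure_eq_setLIntegral_of_restrict_eq_withDensity {α : Type*} [MeasurableSpace α]
    {μ ν : Measure α} {s t : Set α} {g : α → ℝ≥0∞}
    (h : μ.restrict t = (ν.restrict t).withDensity g) (hs : MeasurableSet s) (hst : s ⊆ t) :
    μ s = ∫⁻ x in s, g x ∂ν := by
  rw [← Measure.restrict_eq_self μ hst, h, withDensity_apply _ hs,
    Measure.restrict_restrict hs, inter_eq_left.2 hst]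

section AntitoneDensity

variable {μ : Measure ℝ} {a b c : ℝ} {f : ℝ → ℝ}

lemma measure_Icc_le_of_antitoneOn_density (hf : AntitoneOn f (Ici a))
    (hμ : μ.restrict (Ioi a) = (volume.restrict (Ioi a)).withDensity fun x => ENNReal.ofReal (f x))
    (hab : a < b) :
    μ (Icc b c) ≤ ENNReal.ofReal (f b) * volume (Icc b c) := by
  rw [measure_eq_setLIntegral_of_restrict_eq_withDensity hμ measurableSet_Icc
    fun x hx => hab.trans_le hx.1, ← setLIntegral_const]
  exact setLIntegral_mono' measurableSet_Icc fun x hx =>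
    ENNReal.ofReal_le_ofReal (hf (mem_Ici.2 hab.le) (mem_Ici.2 (hab.le.trans hx.1)) hx.1)

lemma mul_volume_Ioo_le_of_antitoneOn_density (hf : AntitoneOn f (Ici a))
    (hμ : μ.restrict (Ioi a) = (volume.restrict (Ioi a)).withDensity fun x => ENNReal.ofReal (f x))
    (hab : a ≤ b) :
    ENNReal.ofReal (f b) * volume (Ioo a b) ≤ μ (Ioo a b) := by
  rw [measure_eq_setLIntegral_of_restrict_eq_withDensity hμ measurableSet_Ioo
    fun x hx => hx.1, ← setLIntegral_const]
  exact setLIntegral_mono' measurableSet_Ioo fun x hx =>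
    ENNReal.ofReal_le_ofReal (hf (mem_Ici.2 hx.1.le) (mem_Ici.2 hab) hx.2.le)

end AntitoneDensity

lemma le_mul_div_of_le_mul_of_mul_le {a b c m A B γ : ℝ} (hab : a < b) (hbc : b ≤ c)
    (hA : A ≤ m * (c - b)) (hB : m * (b - a) ≤ B) (hAB : A + B ≤ γ) :
    A ≤ γ * (c - b) / (c - a) := by
  rw [le_div_iff₀ (by linarith)]
  nlinarith [mul_le_mul_of_nonneg_right hA (sub_nonneg.2 hab.le),
    mul_le_mul_of_nonneg_right hB (sub_nonneg.2 hbc),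
    mul_le_mul_of_nonneg_right hAB (sub_nonneg.2 hbc)]

lemma Feas4.measureReal_Icc_le {a bl bu γl γu : ℝ} {μ : Measure ℝ} (hμ : Feas4 a γl γu μ)
    (h1 : a < bl) (h2 : bl ≤ bu) :
    μ.real (Icc bl bu) ≤ γu * (bu - bl) / (bu - a) := by
  obtain ⟨hprob, ⟨f, hf0, hf, hμf⟩, -, hγu⟩ := hμ
  have hfbl : 0 ≤ f bl := hf0 bl h1.le
  refine le_mul_div_of_le_mul_of_mul_le h1 h2 (m := f bl) (B := μ.real (Ioo a bl)) ?_ ?_ ?_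
  · have := measure_Icc_le_of_antitoneOn_density (c := bu) hf hμf h1
    rw [Real.volume_Icc, ← ENNReal.ofReal_mul hfbl] at this
    exact ENNReal.toReal_le_of_le_ofReal (mul_nonneg hfbl (sub_nonneg.2 h2)) this
  · have := mul_volume_Ioo_le_of_antitoneOn_density hf hμf h1.le
    rw [Real.volume_Ioo, ← ENNReal.ofReal_mul hfbl] at this
    exact (ENNReal.ofReal_le_iff_le_toReal (measure_ne_top μ _)).1 this
  · calc μ.real (Icc bl bu) + μ.real (Ioo a bl) = μ.real (Ioo a bl ∪ Icc bl bu) := by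
          rw [add_comm, measureReal_union ((Iio_disjoint_Ici le_rfl).mono Ioo_subset_Iio_self
            Icc_subset_Ici_self) measurableSet_Icc]
      _ ≤ μ.real (Ioi a) := by
          rw [Ioo_union_Icc_eq_Ioc h1 h2]
          exact measureReal_mono Ioc_subset_Ioi_self
      _ ≤ γu := hγu

section OptMeas4

variable {a bl bu γu c : ℝ}

lemma optMeas4_univ (hab : a < bu) (hγ0 : 0 ≤ γu) (hγ1 : γu ≤ 1) :
    OptMeas4 a bu γu c univ = 1 := by
  rw [OptMeas4, Measure.add_apply, Measure.smul_apply, Measure.smul_apply,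
    Measure.restrict_apply_univ, Real.volume_Icc, measure_univ, smul_eq_mul, smul_eq_mul,
    mul_one, ← ENNReal.ofReal_mul (div_nonneg hγ0 (sub_pos.2 hab).le),
    div_mul_cancel₀ _ (sub_pos.2 hab).ne', ← ENNReal.ofReal_add hγ0 (sub_nonneg.2 hγ1)]
  simp

lemma optMeas4_restrict_Ioi (hc : c ≤ a) :
    (OptMeas4 a bu γu c).restrict (Ioi a) =
      ENNReal.ofReal (γu / (bu - a)) • volume.restrict (Ioc a bu) := by
  have hdirac : (Measure.dirac c).restrict (Ioi a) = 0 := by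
    rw [Measure.restrict_eq_zero, Measure.dirac_apply' _ measurableSet_Ioi]
    simp [hc]
  rw [OptMeas4, Measure.restrict_add, Measure.restrict_smul, Measure.restrict_smul, hdirac,
    smul_zero, add_zero, Measure.restrict_restrict measurableSet_Ioi]
  congr 2
  ext x
  grind

lemma optMeas4_restrict_Ioi_eq_withDensity (hc : c ≤ a) :
    (OptMeas4 a bu γu c).restrict (Ioi a) = (volume.restrict (Ioi a)).withDensity
      fun x => ENNReal.ofReal ((Iic bu).indicator (fun _ => γu / (bu - a)) x) := by
  have hdens : (fun x => ENNReal.ofReal ((Iic bu).indicator (fun _ => γu / (bu - a)) x)) =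
      (Iic bu).indicator fun _ => ENNReal.ofReal (γu / (bu - a)) := by
    funext x
    by_cases hx : x ∈ Iic bu <;> simp [hx]
  rw [optMeas4_restrict_Ioi hc, hdens, withDensity_indicator measurableSet_Iic,
    withDensity_const, Measure.restrict_restrict measurableSet_Iic, inter_comm, Ioi_inter_Iic]

lemma optMeas4_apply_of_subset_Ioi (hc : c ≤ a) {s : Set ℝ} (hs : MeasurableSet s)
    (hsa : s ⊆ Ioi a) :
    OptMeas4 a bu γu c s = ENNReal.ofReal (γu / (bu - a)) * volume (s ∩ Ioc a bu) := by
  rw [← Measure.restrict_eq_self _ hsa, optMeas4_restrict_Ioi hc, Measure.smul_apply,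
    Measure.restrict_apply hs, smul_eq_mul]

lemma optMeas4_Ioi (hc : c ≤ a) (hab : a < bu) (hγ0 : 0 ≤ γu) :
    (OptMeas4 a bu γu c (Ioi a)).toReal = γu := by
  rw [optMeas4_apply_of_subset_Ioi hc measurableSet_Ioi subset_rfl, inter_comm, Ioc_inter_Ioi,
    max_self, Real.volume_Ioc, ← ENNReal.ofReal_mul (div_nonneg hγ0 (sub_pos.2 hab).le),
    div_mul_cancel₀ _ (sub_pos.2 hab).ne', ENNReal.toReal_ofReal hγ0]

lemma optMeas4_Icc (hc : c ≤ a) (h1 : a < bl) (h2 : bl ≤ bu) (hγ0 : 0 ≤ γu) :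
    (OptMeas4 a bu γu c (Icc bl bu)).toReal = γu * (bu - bl) / (bu - a) := by
  have hk : 0 ≤ γu / (bu - a) := div_nonneg hγ0 (sub_pos.2 (h1.trans_le h2)).le
  rw [optMeas4_apply_of_subset_Ioi hc measurableSet_Icc fun x hx => h1.trans_le hx.1,
    inter_eq_left.2 (Icc_subset_Ioc_iff h2 |>.2 ⟨h1, le_rfl⟩), Real.volume_Icc,
    ← ENNReal.ofReal_mul hk, ENNReal.toReal_ofReal (mul_nonneg hk (sub_nonneg.2 h2))]
  ring

lemma feas4_optMeas4 {γl : ℝ} (hc : c ≤ a) (hab : a < bu) (hγl : γl ≤ γu) (hγ0 : 0 ≤ γu)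
    (hγ1 : γu ≤ 1) :
    Feas4 a γl γu (OptMeas4 a bu γu c) := by
  have hk : 0 ≤ γu / (bu - a) := div_nonneg hγ0 (sub_pos.2 hab).le
  have hdens_nonneg : ∀ x, 0 ≤ (Iic bu).indicator (fun _ => γu / (bu - a)) x :=
    indicator_nonneg fun _ _ => hk
  refine ⟨⟨optMeas4_univ hab hγ0 hγ1⟩, ⟨_, fun x _ => hdens_nonneg x, ?_,
    optMeas4_restrict_Ioi_eq_withDensity hc⟩, ?_, ?_⟩
  · intro x _ y _ hxy
    by_cases hy : y ∈ Iic bu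
    · rw [indicator_of_mem hy, indicator_of_mem (mem_Iic.2 (hxy.trans hy))]
    · rw [indicator_of_notMem hy]
      exact hdens_nonneg x
  · rwa [optMeas4_Ioi hc hab hγ0]
  · rw [optMeas4_Ioi hc hab hγ0]

end OptMeas4

/-- Monotone tail estimation: the supremum of `μ([bl, bu])` over all feasible
measures equals `γu (bu - bl)/(bu - a)`, and it is attained by the measure placing mass `γu`
uniformly on `[a, bu]` and mass `1 - γu` at any point `c < a`. -/
theorem stmt_4 (a bl bu γl γu : ℝ) (h1 : a < bl) (h2 : bl < bu)
    (h3 : 0 ≤ γl) (h4 : γl ≤ γu) (h5 : γu ≤ 1) :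
    IsGreatest { r : ℝ | ∃ μ : Measure ℝ, Feas4 a γl γu μ ∧ r = (μ (Set.Icc bl bu)).toReal }
      (γu * (bu - bl) / (bu - a)) ∧
    ∀ c : ℝ, c < a →
      Feas4 a γl γu (OptMeas4 a bu γu c) ∧
      ((OptMeas4 a bu γu c) (Set.Icc bl bu)).toReal = γu * (bu - bl) / (bu - a) := by
  have hγ0 : 0 ≤ γu := h3.trans h4
  have hopt : ∀ c : ℝ, c < a → Feas4 a γl γu (OptMeas4 a bu γu c) ∧
      ((OptMeas4 a bu γu c) (Set.Icc bl bu)).toReal = γu * (bu - bl) / (bu - a) :=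
    fun c hc => ⟨feas4_optMeas4 hc.le (h1.trans h2) h4 hγ0 h5, optMeas4_Icc hc.le h1 h2.le hγ0⟩
  obtain ⟨hfeas, hval⟩ := hopt (a - 1) (by linarith)
  refine ⟨⟨⟨_, hfeas, hval.symm⟩, ?_⟩, hopt⟩
  rintro r ⟨μ, hμ, rfl⟩
  exact hμ.measureReal_Icc_le h1 h2.le
end

section
/- Let 𝒥 be a finite index set, H, G_j : [0,∞) → ℝ measurable, γ_j ∈ ℝ, and let Z* be the optimal value of the moment program sup{ ∫ H dP : ∫ G_j dP ≤ γ_j for all j ∈ 𝒥, P ∈ 𝒬(ℝ⁺) }. Fix x ∈ [0,∞) ∪ {∞}. Suppose the program is consistent and satisfies the Slater-type condition of Assumption 2. If 𝒥 = 𝒥(x) and sup{ H(u) : u ∈ [0,∞) } > 0, then Z* = +∞; if 𝒥 = 𝒥(x) and sup{ H(u) : u ∈ [0,∞) } ≤ 0, then Z* = 0. -/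
open MeasureTheory Filter Set Topology
open scoped ENNReal

/-- Membership in `𝒬(ℝ⁺)`: a finite nonnegative Borel measure on `[0,∞)`,
encoded as a finite measure on `ℝ` giving no mass to the negative reals. -/
def QRp (μ : Measure ℝ) : Prop :=
  IsFiniteMeasure μ ∧ μ (Set.Iio 0) = 0

/-- The signed integral `∫ f dμ` with values in the extended reals, defined as the difference
of the lower integrals of the positive and negative parts of `f`. -/
noncomputable def eInt (f : ℝ → ℝ) (μ : Measure ℝ) : EReal :=
  ((∫⁻ x, ENNReal.ofReal (f x) ∂μ : ℝ≥0∞) : EReal)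
    - ((∫⁻ x, ENNReal.ofReal (-(f x)) ∂μ : ℝ≥0∞) : EReal)

/-- The optimal value (in the extended reals, `⊥` if infeasible) of the moment problem
`sup { ∫ H dP : ∫ G_j dP ≤ γ_j (j ∈ J), P ∈ 𝒬(ℝ⁺) }`. -/
noncomputable def primalVal (J : Finset ℕ) (H : ℝ → ℝ) (G : ℕ → ℝ → ℝ) (γ : ℕ → ℝ) : EReal :=
  sSup { z : EReal | ∃ μ : Measure ℝ, QRp μ ∧
    (∀ j ∈ J, eInt (G j) μ ≤ ((γ j : ℝ) : EReal)) ∧ z = eInt H μ }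

/-- The index `i ∈ J` is *redundant* at `x` (where the filter `l` is `𝓝 x` for `x ∈ [0,∞)` or
`atTop` for `x = ∞`): there is a sequence `uₙ → x` in the support of `G i` along which
`limsup H(uₙ)/|G i(uₙ)| ≥ 0` and `limsup G j(uₙ)/|G i(uₙ)| ≤ 0` for every `j ∈ J`.
This defines the set `𝒥(x)` of the paper. -/
def Redundant {ι : Type*} (J : Finset ι) (H : ℝ → ℝ) (G : ι → ℝ → ℝ) (l : Filter ℝ)
    (i : ι) : Prop :=
  i ∈ J ∧ ∃ u : ℕ → ℝ, (∀ n, 0 ≤ u n ∧ G i (u n) ≠ 0) ∧ Filter.Tendsto u Filter.atTop l ∧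
    (0 : EReal) ≤ Filter.limsup (fun n => ((H (u n) / |G i (u n)| : ℝ) : EReal)) Filter.atTop ∧
    ∀ j ∈ J, Filter.limsup (fun n => ((G j (u n) / |G i (u n)| : ℝ) : EReal)) Filter.atTop
      ≤ (0 : EReal)

/-- The admissible filters: `𝓝 x` for some `x ∈ [0,∞)`, or `atTop` (i.e. `x = ∞`). -/
def PtFilter (l : Filter ℝ) : Prop :=
  (∃ x : ℝ, 0 ≤ x ∧ l = nhds x) ∨ l = Filter.atTop

/-- Assumption 2 of the paper (Slater-type condition): the constraint system
`{∫ G_j dP ≤ γ_j, j ∈ J}` admits a representation by measurable inequality constraints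
(indices `Jt`) and equality constraints (indices `Jt'`) defining the same feasible subset of
`𝒬(ℝ⁺)`, such that some `P ∈ 𝒬(ℝ⁺)` satisfies all the inequality constraints strictly, and the
equality right-hand sides form an interior point of the set of achievable moment vectors. -/
def SlaterCond (J : Finset ℕ) (G : ℕ → ℝ → ℝ) (γ : ℕ → ℝ) : Prop :=
  ∃ (Jt Jt' : Finset ℕ) (Gt : ℕ → ℝ → ℝ) (γt : ℕ → ℝ),
    (∀ j ∈ Jt ∪ Jt', Measurable (Gt j)) ∧
    (∀ μ : Measure ℝ, QRp μ →
      ((∀ j ∈ J, eInt (G j) μ ≤ ((γ j : ℝ) : EReal)) ↔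
        ((∀ j ∈ Jt, eInt (Gt j) μ ≤ ((γt j : ℝ) : EReal)) ∧
         (∀ j ∈ Jt', eInt (Gt j) μ = ((γt j : ℝ) : EReal))))) ∧
    (∃ μ : Measure ℝ, QRp μ ∧ ∀ j ∈ Jt, eInt (Gt j) μ < ((γt j : ℝ) : EReal)) ∧
    ((fun j : ↥Jt' => γt j) ∈ interior {v : ↥Jt' → ℝ | ∃ μ : Measure ℝ, QRp μ ∧
      ∀ j : ↥Jt', eInt (Gt (j : ℕ)) μ = ((v j : ℝ) : EReal)})

/-! If every constraint index is redundant at `x`, then for each `i ∈ J` and `ε > 0` there is an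
atom `w • δ_p` (`p ≥ 0`, `w ≥ 0`) whose `G i`-moment is `-1`, whose other `G k`-moments are at
most `ε` and whose `H`-moment is at least `-ε`. Summing these atoms gives a discrete measure `ν`
with every constraint moment `≤ -1` and objective `≥ -ε`. Adding `t • ν` to `c • δ_{u₀}` with
`t` large makes the latter feasible at an objective cost of at most `t ε`, so every value
`c H(u₀) - δ` is a lower bound for `Z*`: this gives `Z* = +∞` when `H(u₀) > 0` for some `u₀ ≥ 0`,
and `Z* ≥ 0` in general, while `H ≤ 0` on `[0,∞)` forces `∫ H dP ≤ 0`. -/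

lemma eInt_eq_integral {f : ℝ → ℝ} {μ : Measure ℝ} (hf : Integrable f μ) :
    eInt f μ = ((∫ x, f x ∂μ : ℝ) : EReal) := by
  have hneg : ∫⁻ x, ENNReal.ofReal (-f x) ∂μ < ∞ := hf.neg.lintegral_lt_top
  rw [eInt, integral_eq_lintegral_pos_part_sub_lintegral_neg_part hf, EReal.coe_sub,
    EReal.coe_ennreal_toReal hf.lintegral_lt_top.ne, EReal.coe_ennreal_toReal hneg.ne]

lemma eInt_nonpos {f : ℝ → ℝ} {μ : Measure ℝ} (hμ : μ (Iio 0) = 0)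
    (hf : ∀ u, 0 ≤ u → f u ≤ 0) : eInt f μ ≤ 0 := by
  have hpos : ∫⁻ x, ENNReal.ofReal (f x) ∂μ = 0 := by
    refine lintegral_eq_zero_of_ae_eq_zero ?_
    refine measure_mono_null (fun x hx => ?_) hμ
    exact not_le.1 fun h => hx (ENNReal.ofReal_eq_zero.2 (hf x h))
  rw [eInt, hpos, EReal.coe_ennreal_zero]
  exact EReal.sub_nonpos.2 (EReal.coe_ennreal_nonneg _)

lemma QRp.add {μ ν : Measure ℝ} (hμ : QRp μ) (hν : QRp ν) : QRp (μ + ν) := by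
  obtain ⟨_, hμ₀⟩ := hμ
  obtain ⟨_, hν₀⟩ := hν
  exact ⟨inferInstance, by simp [hμ₀, hν₀]⟩

lemma QRp.smul {μ : Measure ℝ} (hμ : QRp μ) {c : ℝ≥0∞} (hc : c ≠ ∞) : QRp (c • μ) := by
  have := hμ.1
  exact ⟨μ.smul_finite hc, by simp [hμ.2]⟩

lemma qRp_dirac {p : ℝ} (hp : 0 ≤ p) : QRp (Measure.dirac p) :=
  ⟨inferInstance, by simp [hp]⟩

section Atoms

variable {ι : Type*}

lemma integrable_sum_dirac (f : ℝ → ℝ) (s : Finset ι) (w p : ι → ℝ) :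
    Integrable f (∑ j ∈ s, ENNReal.ofReal (w j) • Measure.dirac (p j)) :=
  integrable_finsetSum_measure.2 fun _ _ =>
    (integrable_dirac enorm_lt_top).smul_measure ENNReal.ofReal_ne_top

lemma integral_sum_dirac (f : ℝ → ℝ) {s : Finset ι} {w : ι → ℝ} (p : ι → ℝ)
    (hw : ∀ j ∈ s, 0 ≤ w j) :
    ∫ x, f x ∂(∑ j ∈ s, ENNReal.ofReal (w j) • Measure.dirac (p j)) = ∑ j ∈ s, w j * f (p j) := by
  rw [integral_finsetSum_measure fun _ _ =>
    (integrable_dirac enorm_lt_top).smul_measure ENNReal.ofReal_ne_top]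
  refine Finset.sum_congr rfl fun j hj => ?_
  rw [integral_smul_measure, integral_dirac, ENNReal.toReal_ofReal (hw j hj), smul_eq_mul]

lemma qRp_sum_dirac {s : Finset ι} (w : ι → ℝ) {p : ι → ℝ} (hp : ∀ j ∈ s, 0 ≤ p j) :
    QRp (∑ j ∈ s, ENNReal.ofReal (w j) • Measure.dirac (p j)) :=
  Finset.sum_induction _ QRp (fun _ _ => QRp.add) ⟨inferInstance, rfl⟩
    fun j hj => (qRp_dirac (hp j hj)).smul ENNReal.ofReal_ne_top

end Atoms

section Redundant

variable {ι : Type*} {J : Finset ι} {H : ℝ → ℝ} {G : ι → ℝ → ℝ} {l : Filter ℝ}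

lemma Redundant.exists_atom {i : ι} (hi : Redundant J H G l i) {ε : ℝ} (hε : 0 < ε)
    (hε₁ : ε < 1) :
    ∃ p w : ℝ, 0 ≤ p ∧ 0 ≤ w ∧ w * G i p = -1 ∧ (∀ k ∈ J, w * G k p ≤ ε) ∧ -ε ≤ w * H p := by
  obtain ⟨hiJ, u, hu, -, hH, hG⟩ := hi
  have hGev : ∀ᶠ n in atTop, ∀ k ∈ J, G k (u n) / |G i (u n)| < ε := by
    refine (eventually_all_finset J).2 fun k hk => ?_
    filter_upwards [eventually_lt_of_limsup_lt ((hG k hk).trans_lt (EReal.coe_pos.2 hε))]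
      with n hn using EReal.coe_lt_coe_iff.1 hn
  have hHfr : ∃ᶠ n in atTop, -ε < H (u n) / |G i (u n)| := by
    have hlt : (((-ε : ℝ)) : EReal) < 0 := EReal.coe_neg'.2 (neg_neg_iff_pos.2 hε)
    exact (frequently_lt_of_lt_limsup (by isBoundedDefault) (hlt.trans_le hH)).mono
      fun n hn => EReal.coe_lt_coe_iff.1 hn
  obtain ⟨n, hHn, hGn⟩ := (hHfr.and_eventually hGev).exists
  have hGi : G i (u n) < 0 := by
    by_contra! hpos
    have := hGn i hiJ
    rw [abs_of_nonneg hpos, div_self (hu n).2] at this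
    linarith
  refine ⟨u n, |G i (u n)|⁻¹, (hu n).1, inv_nonneg.2 (abs_nonneg _), ?_,
    fun k hk => ?_, ?_⟩
  · rw [inv_mul_eq_div, abs_of_neg hGi, div_neg, div_self hGi.ne]
  · rw [inv_mul_eq_div]
    exact (hGn k hk).le
  · rw [inv_mul_eq_div]
    exact hHn.le

lemma exists_atoms_of_redundant (hall : ∀ i ∈ J, Redundant J H G l i) {ε : ℝ} (hε : 0 < ε) :
    ∃ p w : ι → ℝ, (∀ j ∈ J, 0 ≤ p j) ∧ (∀ j ∈ J, 0 ≤ w j) ∧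
      (∀ k ∈ J, ∑ j ∈ J, w j * G k (p j) ≤ -1) ∧ -ε ≤ ∑ j ∈ J, w j * H (p j) := by
  set N : ℝ := (J.card : ℝ)
  have hN : 0 ≤ N := Nat.cast_nonneg _
  set η := min 1 ε / (2 * (N + 1))
  have hmin : 0 < min 1 ε := lt_min one_pos hε
  have hη : 0 < η := by positivity
  have hηN : 2 * (N + 1) * η = min 1 ε := mul_div_cancel₀ _ (by positivity)
  have hη₁ : η < 1 := by nlinarith [min_le_left 1 ε]
  choose! p w hp hw hGi hGk hH using fun i hi => (hall i hi).exists_atom hη hη₁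
  refine ⟨p, fun j => 2 * w j, hp, fun j hj => by simp [hw j hj], fun k hk => ?_, ?_⟩
  · classical
    have hrest : ∑ j ∈ J.erase k, w j * G k (p j) ≤ N * η :=
      calc ∑ j ∈ J.erase k, w j * G k (p j) ≤ (J.erase k).card • η :=
            Finset.sum_le_card_nsmul _ _ _ fun j hj => hGk j (Finset.mem_of_mem_erase hj) k hk
        _ ≤ N * η := by
            rw [nsmul_eq_mul]
            gcongr
            exact Nat.cast_le.2 Finset.card_erase_le
    calc ∑ j ∈ J, 2 * w j * G k (p j)
        = 2 * (w k * G k (p k) + ∑ j ∈ J.erase k, w j * G k (p j)) := by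
          rw [← Finset.add_sum_erase J _ hk, mul_add, Finset.mul_sum]
          simp only [mul_assoc]
      _ ≤ 2 * (-1 + N * η) := by rw [hGi k hk]; gcongr
      _ ≤ -1 := by nlinarith [min_le_left 1 ε]
  · have hsum : N * (-η) ≤ ∑ j ∈ J, w j * H (p j) := by
      simpa using Finset.card_nsmul_le_sum J _ (-η) hH
    calc -ε ≤ 2 * (N * (-η)) := by nlinarith [min_le_right 1 ε]
      _ ≤ 2 * ∑ j ∈ J, w j * H (p j) := by gcongr
      _ = ∑ j ∈ J, 2 * w j * H (p j) := by rw [Finset.mul_sum]; simp only [mul_assoc]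

end Redundant

section Feasible

variable {ι : Type*} {J : Finset ι} {H : ℝ → ℝ} {G : ι → ℝ → ℝ} {γ : ι → ℝ} {l : Filter ℝ}

lemma exists_measure_of_redundant (hall : ∀ i ∈ J, Redundant J H G l i) {ε : ℝ} (hε : 0 < ε) :
    ∃ ν : Measure ℝ, QRp ν ∧ (∀ f : ℝ → ℝ, Integrable f ν) ∧
      (∀ k ∈ J, ∫ x, G k x ∂ν ≤ -1) ∧ -ε ≤ ∫ x, H x ∂ν := by
  obtain ⟨p, w, hp, hw, hG, hH⟩ := exists_atoms_of_redundant hall hε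
  refine ⟨∑ j ∈ J, ENNReal.ofReal (w j) • Measure.dirac (p j), qRp_sum_dirac w hp,
    fun f => integrable_sum_dirac f J w p, fun k hk => ?_, ?_⟩
  · rw [integral_sum_dirac _ p hw]
    exact hG k hk
  · rwa [integral_sum_dirac _ p hw]

lemma exists_feasible_of_redundant (hall : ∀ i ∈ J, Redundant J H G l i) {u₀ c δ : ℝ}
    (hu₀ : 0 ≤ u₀) (hc : 0 ≤ c) (hδ : 0 < δ) :
    ∃ μ : Measure ℝ, QRp μ ∧ (∀ k ∈ J, eInt (G k) μ ≤ ((γ k : ℝ) : EReal)) ∧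
      ((c * H u₀ - δ : ℝ) : EReal) ≤ eInt H μ := by
  set t := ∑ k ∈ J, |c * G k u₀ - γ k|
  have ht : 0 ≤ t := Finset.sum_nonneg fun _ _ => abs_nonneg _
  have htk : ∀ k ∈ J, c * G k u₀ - γ k ≤ t := fun k hk =>
    (le_abs_self _).trans (Finset.single_le_sum (f := fun k => |c * G k u₀ - γ k|)
      (fun _ _ => abs_nonneg _) hk)
  obtain ⟨ν, hνQ, hνint, hνG, hνH⟩ :=
    exists_measure_of_redundant hall (ε := δ / (t + 1)) (by positivity)
  set μ := ENNReal.ofReal t • ν + ENNReal.ofReal c • Measure.dirac u₀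
  have hdirac : ∀ f : ℝ → ℝ, Integrable f (ENNReal.ofReal c • Measure.dirac u₀) := fun _ =>
    (integrable_dirac enorm_lt_top).smul_measure ENNReal.ofReal_ne_top
  have hμ : ∀ f : ℝ → ℝ, eInt f μ = ((t * ∫ x, f x ∂ν + c * f u₀ : ℝ) : EReal) := fun f => by
    have hνt := (hνint f).smul_measure (ENNReal.ofReal_ne_top (r := t))
    rw [eInt_eq_integral (hνt.add_measure (hdirac f)), integral_add_measure hνt (hdirac f),
      integral_smul_measure, integral_smul_measure, integral_dirac, ENNReal.toReal_ofReal ht,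
      ENNReal.toReal_ofReal hc, smul_eq_mul, smul_eq_mul]
  refine ⟨μ, (hνQ.smul ENNReal.ofReal_ne_top).add ((qRp_dirac hu₀).smul ENNReal.ofReal_ne_top),
    fun k hk => ?_, ?_⟩
  · rw [hμ, EReal.coe_le_coe_iff]
    nlinarith [htk k hk, mul_le_mul_of_nonneg_left (hνG k hk) ht]
  · rw [hμ, EReal.coe_le_coe_iff]
    have htε : t * (δ / (t + 1)) ≤ δ := by
      rw [mul_div_assoc', div_le_iff₀ (by positivity)]
      nlinarith
    nlinarith [mul_le_mul_of_nonneg_left hνH ht]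

end Feasible

lemma le_primalVal_of_redundant {J : Finset ℕ} {H : ℝ → ℝ} {G : ℕ → ℝ → ℝ} {γ : ℕ → ℝ}
    {l : Filter ℝ} (hall : ∀ i ∈ J, Redundant J H G l i) {u₀ c δ : ℝ}
    (hu₀ : 0 ≤ u₀) (hc : 0 ≤ c) (hδ : 0 < δ) :
    ((c * H u₀ - δ : ℝ) : EReal) ≤ primalVal J H G γ := by
  obtain ⟨μ, hμ, hfeas, hval⟩ := exists_feasible_of_redundant (γ := γ) hall hu₀ hc hδ
  exact hval.trans (le_sSup ⟨μ, hμ, hfeas, rfl⟩)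

lemma primalVal_nonpos {J : Finset ℕ} {H : ℝ → ℝ} {G : ℕ → ℝ → ℝ} {γ : ℕ → ℝ}
    (hH : ∀ u, 0 ≤ u → H u ≤ 0) : primalVal J H G γ ≤ 0 :=
  sSup_le fun _ ⟨_, hμ, _, hz⟩ => hz ▸ eInt_nonpos hμ.2 hH

theorem stmt_13_general (J : Finset ℕ) (H : ℝ → ℝ) (G : ℕ → ℝ → ℝ) (γ : ℕ → ℝ)
    (l : Filter ℝ)
    (hall : ∀ i ∈ J, Redundant J H G l i) :
    ((∃ u : ℝ, 0 ≤ u ∧ 0 < H u) → primalVal J H G γ = ⊤) ∧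
    ((∀ u : ℝ, 0 ≤ u → H u ≤ 0) → primalVal J H G γ = 0) := by
  refine ⟨fun ⟨u₀, hu₀, hHu₀⟩ => ?_, fun hH => le_antisymm (primalVal_nonpos hH) ?_⟩
  · refine (EReal.eq_top_iff_forall_lt _).2 fun y => ?_
    have hcancel : |y + 2| / H u₀ * H u₀ = |y + 2| := div_mul_cancel₀ _ hHu₀.ne'
    calc (y : EReal) < ((|y + 2| / H u₀ * H u₀ - 1 : ℝ) : EReal) := by
          rw [hcancel, EReal.coe_lt_coe_iff]
          linarith [le_abs_self (y + 2)]
      _ ≤ primalVal J H G γ := le_primalVal_of_redundant hall hu₀ (by positivity) one_pos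
  · refine EReal.ge_of_forall_gt_iff_ge.1 fun z hz => ?_
    have hz : z < 0 := EReal.coe_neg'.1 hz
    simpa using le_primalVal_of_redundant (γ := γ) hall le_rfl le_rfl (neg_pos.2 hz)

/-- Trivial cases of the redundant-constraint theorem: if every constraint
index is redundant at `x` (i.e. `𝒥 = 𝒥(x)`), then the optimal value is `+∞` when
`sup_{u ≥ 0} H(u) > 0` and `0` when `sup_{u ≥ 0} H(u) ≤ 0`. -/
theorem stmt_13 (J : Finset ℕ) (H : ℝ → ℝ) (G : ℕ → ℝ → ℝ) (γ : ℕ → ℝ)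
    (hHm : Measurable H) (hGm : ∀ j ∈ J, Measurable (G j))
    (l : Filter ℝ) (hl : PtFilter l)
    (hcons : ∃ μ : Measure ℝ, QRp μ ∧ ∀ j ∈ J, eInt (G j) μ ≤ ((γ j : ℝ) : EReal))
    (hslater : SlaterCond J G γ)
    (hall : ∀ i ∈ J, Redundant J H G l i) :
    ((∃ u : ℝ, 0 ≤ u ∧ 0 < H u) → primalVal J H G γ = ⊤) ∧
    ((∀ u : ℝ, 0 ≤ u → H u ≤ 0) → primalVal J H G γ = 0) :=
  stmt_13_general J H G γ l hall
end
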